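/- arXiv:1104.1361 — 5 statements merged into one kernel-verified Lean document; each statement's English description precedes it below -/
import Mathlib

section
/- Let α ∈ (Z_{p^r})^* have multiplicative order q^t, where p, q are distinct primes and t ≥ 1. Then for every b ∈ Z_{q^s} with q^t ∤ b, the element α^b − 1 is invertible in Z_{p^r}, i.e., α^b − 1 ∈ (Z_{p^r})^*. -/
/-!
In `ZMod (p ^ r)` every non-unit is nilpotent. So if `y = α ^ b` had `y - 1` non-invertible, then
`(∑_{i<m} y ^ i) * (y - 1) = y ^ m - 1 = 0` for `m = orderOf y`, while `∑_{i<m} y ^ i` is `m` plus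
a nilpotent, hence a unit because `m ∣ q ^ t` is prime to `p`. This forces `y = 1`, i.e. `q ^ t ∣ b`.
-/

theorem eq_one_of_pow_eq_one_of_isNilpotent_sub_one {R : Type*} [CommRing R] {y : R} {m : ℕ}
    (hnil : IsNilpotent (y - 1)) (hm : IsUnit (m : R)) (hpow : y ^ m = 1) : y = 1 := by
  have hsum : IsUnit (∑ i ∈ Finset.range m, y ^ i) := by
    have hdiff : IsNilpotent (∑ i ∈ Finset.range m, (y ^ i - 1)) := by
      refine isNilpotent_sum fun i _ ↦ ?_
      obtain ⟨c, hc⟩ := sub_one_dvd_pow_sub_one y i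
      exact hc ▸ (Commute.all _ _).isNilpotent_mul_right hnil
    have hsplit : ∑ i ∈ Finset.range m, y ^ i = m + ∑ i ∈ Finset.range m, (y ^ i - 1) := by
      simp [Finset.sum_sub_distrib]
    exact hsplit ▸ hdiff.isUnit_add_left_of_commute hm (Commute.all _ _)
  have hgeom : (∑ i ∈ Finset.range m, y ^ i) * (y - 1) = 0 := by
    rw [geom_sum_mul, hpow, sub_self]
  exact sub_eq_zero.mp (hsum.mul_right_eq_zero.mp hgeom)

theorem ZMod.isNilpotent_of_not_isUnit {p r : ℕ} (hp : p.Prime) {x : ZMod (p ^ r)}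
    (hx : ¬IsUnit x) : IsNilpotent x := by
  have : NeZero (p ^ r) := ⟨pow_ne_zero r hp.ne_zero⟩
  rw [← ZMod.natCast_zmod_val x, ZMod.isUnit_iff_coprime] at hx
  have hdvd : p ∣ x.val := by
    by_contra h
    exact hx ((hp.coprime_iff_not_dvd.mpr h).symm.pow_right r)
  refine ⟨r, ?_⟩
  rw [← ZMod.natCast_zmod_val x, ← Nat.cast_pow, ZMod.natCast_eq_zero_iff]
  exact pow_dvd_pow_of_dvd hdvd r

theorem stmt_4_general (p q r t : ℕ) (hp : p.Prime) (hq : q.Prime) (hpq : p ≠ q)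
    (α : (ZMod (p ^ r))ˣ) (hα : orderOf α = q ^ t)
    (b : ℕ) (hb : ¬ q ^ t ∣ b) :
    IsUnit ((α : ZMod (p ^ r)) ^ b - 1) := by
  have hne : α ^ b ≠ 1 := fun h ↦ hb (hα ▸ orderOf_dvd_of_pow_eq_one h)
  have hcop : (orderOf (α ^ b)).Coprime (p ^ r) :=
    (Nat.coprime_pow_primes t r hq hp hpq.symm).coprime_dvd_left (hα ▸ orderOf_pow_dvd b)
  by_contra h
  refine hne (Units.val_eq_one.mp (eq_one_of_pow_eq_one_of_isNilpotent_sub_one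
    (m := orderOf (α ^ b)) ?_ ((ZMod.isUnit_iff_coprime _ _).mpr hcop) ?_))
  · simpa using ZMod.isNilpotent_of_not_isUnit hp h
  · rw [← Units.val_pow_eq_pow_val, pow_orderOf_eq_one, Units.val_one]

theorem stmt_4 (p q r s t : ℕ) (hp : p.Prime) (hq : q.Prime) (hpq : p ≠ q)
    (hr : 0 < r) (hs : 0 < s) (ht : 1 ≤ t) (hts : t ≤ s)
    (α : (ZMod (p ^ r))ˣ) (hα : orderOf α = q ^ t)
    (b : ℕ) (hb : ¬ q ^ t ∣ b) :
    IsUnit ((α : ZMod (p ^ r)) ^ b - 1) :=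
  stmt_4_general p q r t hp hq hpq α hα b hb
end

section
/- Let G = Z_{p^r} ⋊_α Z_{q^s} with ord(α) = q^t, 1 ≤ t ≤ s. Every cyclic subgroup of G is of the form ⟨x^a y^{q^j}⟩ for some 0 ≤ a < p^r and 0 ≤ j < t, or of the form ⟨x^{p^i} y^{q^j}⟩ for some 0 ≤ i ≤ r and t ≤ j ≤ s. -/
/-!
Conjugation by `y` raises `x` to the unit power `α`, so `⟨x⟩` is normal and every element of
`G` is `x ^ c * y ^ b`. Replacing a generator `g` by `g ^ k` with `k` prime to `|G|` does not
change `⟨g⟩`; since `g ^ k ≡ y ^ (b k)` modulo `⟨x⟩`, a suitable `k` turns the `y`-exponent into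
`q ^ j = gcd(b, q ^ s)`. If `j ≥ t` then `α ^ (q ^ j) = 1`, so `x` commutes with `y ^ (q ^ j)`,
and a second such power turns the `x`-exponent into `p ^ i = gcd(c, p ^ r)`.
-/

namespace Nat

theorem exists_coprime_mul_modEq_dvd (a n : ℕ) [NeZero n] :
    ∃ d, d ∣ n ∧ ∃ k, k.Coprime n ∧ a * k ≡ d [MOD n] := by
  obtain ⟨d, hd, u, hu, ha⟩ := ZMod.eq_unit_mul_divisor (a : ZMod n)
  refine ⟨d, hd, (hu.unit⁻¹ : (ZMod n)ˣ).val.val, ZMod.val_coe_unit_coprime _, ?_⟩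
  rw [← ZMod.natCast_eq_natCast_iff, Nat.cast_mul, ZMod.natCast_zmod_val, ha, mul_right_comm,
    IsUnit.mul_val_inv, one_mul]

theorem exists_coprime_modEq_modEq {m n k₁ k₂ : ℕ} (hmn : m.Coprime n)
    (h₁ : k₁.Coprime m) (h₂ : k₂.Coprime n) :
    ∃ k, k.Coprime (m * n) ∧ k ≡ k₁ [MOD m] ∧ k ≡ k₂ [MOD n] := by
  obtain ⟨k, hk₁, hk₂⟩ := Nat.chineseRemainder hmn k₁ k₂
  exact ⟨k, Nat.Coprime.mul_right (hk₁.gcd_eq.trans h₁) (hk₂.gcd_eq.trans h₂), hk₁, hk₂⟩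

end Nat

theorem ZMod.val_pow_modEq_one_of_orderOf_dvd {n e : ℕ} [NeZero n] {α : (ZMod n)ˣ}
    (he : orderOf α ∣ e) : (α : ZMod n).val ^ e ≡ 1 [MOD n] := by
  rw [← ZMod.natCast_eq_natCast_iff, Nat.cast_pow, ZMod.natCast_zmod_val,
    ← Units.val_pow_eq_pow_val, orderOf_dvd_iff_pow_eq_one.mp he, Units.val_one, Nat.cast_one]

section

variable {G : Type*} [Group G]

theorem Subgroup.zpowers_pow_of_coprime {g : G} {k : ℕ} (hk : k.Coprime (orderOf g)) :
    zpowers (g ^ k) = zpowers g :=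
  le_antisymm (zpowers_le.mpr (pow_mem (mem_zpowers g) k))
    (zpowers_le.mpr (mem_zpowers_pow_iff.mpr hk))

theorem conj_pow_eq_pow_pow {x y : G} {v : ℕ} (h : y * x * y⁻¹ = x ^ v) (e : ℕ) :
    y ^ e * x * (y ^ e)⁻¹ = x ^ v ^ e := by
  induction e with
  | zero => simp
  | succ e ih =>
    calc y ^ (e + 1) * x * (y ^ (e + 1))⁻¹ = y * (y ^ e * x * (y ^ e)⁻¹) * y⁻¹ := by group
      _ = (y * x * y⁻¹) ^ v ^ e := by rw [ih, conj_pow]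
      _ = x ^ v ^ (e + 1) := by rw [h, ← pow_mul, pow_succ']

theorem commute_pow_of_conj_eq_pow {x y : G} {v e : ℕ} (h : y * x * y⁻¹ = x ^ v)
    (he : v ^ e ≡ 1 [MOD orderOf x]) : Commute x (y ^ e) := by
  have := conj_pow_eq_pow_pow h e
  rw [pow_eq_pow_iff_modEq.mpr he, pow_one, mul_inv_eq_iff_eq_mul] at this
  exact this.symm

theorem zpowers_normal_of_conj_eq_pow {x y : G} {v : ℕ} (h : y * x * y⁻¹ = x ^ v)
    (hv : v.Coprime (orderOf x)) (hgen : Subgroup.closure {x, y} = ⊤) :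
    (Subgroup.zpowers x).Normal := by
  refine Subgroup.normalizer_eq_top_iff.mp (eq_top_iff.mpr ?_)
  rw [← hgen, Subgroup.closure_le, Set.insert_subset_iff, Set.singleton_subset_iff]
  refine ⟨Subgroup.le_normalizer (Subgroup.mem_zpowers x),
    Subgroup.mem_normalizer_iff_map_conj_eq.mpr ?_⟩
  rw [MonoidHom.map_zpowers, MonoidHom.coe_coe, MulAut.conj_apply, h,
    Subgroup.zpowers_pow_of_coprime hv]

theorem exists_mem_pow_mul_pow_of_normal {N : Subgroup G} [N.Normal] {n : G} (hn : n ∈ N)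
    (h : G) (k : ℕ) : ∃ n' ∈ N, (n * h) ^ k = n' * h ^ k := by
  refine ⟨(n * h) ^ k * (h ^ k)⁻¹, ?_, by group⟩
  rw [← QuotientGroup.eq_one_iff]
  simp [(QuotientGroup.eq_one_iff n).mpr hn]

theorem exists_pow_lt_orderOf_eq_of_mem_zpowers [Finite G] {x n : G}
    (h : n ∈ Subgroup.zpowers x) : ∃ c < orderOf x, x ^ c = n := by
  classical
  simpa using (isOfFinOrder_of_finite x).mem_zpowers_iff_mem_range_orderOf.mp h

theorem exists_mem_mul_pow_of_sup_zpowers_eq_top [Finite G] {N : Subgroup G} [N.Normal] {y : G}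
    (h : N ⊔ Subgroup.zpowers y = ⊤) (g : G) : ∃ n ∈ N, ∃ b : ℕ, g = n * y ^ b := by
  obtain ⟨n, hn, m, hm, rfl⟩ := Subgroup.mem_sup_of_normal_left.mp (h ▸ Subgroup.mem_top g)
  obtain ⟨b, rfl⟩ := (isOfFinOrder_of_finite y).mem_powers_iff_mem_zpowers.mpr hm
  exact ⟨n, hn, b, rfl⟩

theorem exists_zpowers_mul_pow_eq_zpowers_mul_pow_prime_pow {N : Subgroup G} [N.Normal]
    {m p r : ℕ} (hp : p.Prime) {n y : G} (hn : n ∈ N) (hy : orderOf y = p ^ r)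
    (hcard : Nat.card G = m * p ^ r) (hm : m.Coprime (p ^ r)) (b : ℕ) :
    ∃ n' ∈ N, ∃ j ≤ r, Subgroup.zpowers (n * y ^ b) = Subgroup.zpowers (n' * y ^ p ^ j) := by
  have : NeZero (p ^ r) := ⟨pow_ne_zero r hp.ne_zero⟩
  obtain ⟨_, hd, ky, hky, hbky⟩ := Nat.exists_coprime_mul_modEq_dvd b (p ^ r)
  obtain ⟨j, hjr, rfl⟩ := (Nat.dvd_prime_pow hp).mp hd
  obtain ⟨k, hk, -, hkky⟩ := Nat.exists_coprime_modEq_modEq hm (Nat.coprime_one_left _) hky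
  obtain ⟨n', hn', hgk⟩ := exists_mem_pow_mul_pow_of_normal hn (y ^ b) k
  refine ⟨n', hn', j, hjr, ?_⟩
  rw [← Subgroup.zpowers_pow_of_coprime
      (hk.coprime_dvd_right ((orderOf_dvd_natCard (n * y ^ b)).trans hcard.dvd)),
    hgk, ← pow_mul, pow_eq_pow_iff_modEq.mpr (hy ▸ (hkky.mul_left b).trans hbky)]

theorem exists_zpowers_pow_mul_eq_zpowers_pow_prime_pow_mul {p r : ℕ} (hp : p.Prime) {x z : G}
    (hx : orderOf x = p ^ r) (hxz : Commute x z) (hz : (p ^ r).Coprime (orderOf z)) (c : ℕ) :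
    ∃ i ≤ r, Subgroup.zpowers (x ^ c * z) = Subgroup.zpowers (x ^ p ^ i * z) := by
  have : NeZero (p ^ r) := ⟨pow_ne_zero r hp.ne_zero⟩
  obtain ⟨_, hd, kx, hkx, hckx⟩ := Nat.exists_coprime_mul_modEq_dvd c (p ^ r)
  obtain ⟨i, hir, rfl⟩ := (Nat.dvd_prime_pow hp).mp hd
  obtain ⟨k, hk, hkkx, hk1⟩ := Nat.exists_coprime_modEq_modEq hz hkx (Nat.coprime_one_left _)
  have hord : orderOf (x ^ c * z) ∣ p ^ r * orderOf z :=
    (hxz.pow_left c).orderOf_mul_dvd_mul_orderOf.trans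
      (Nat.mul_dvd_mul_right (hx ▸ orderOf_pow_dvd c) _)
  refine ⟨i, hir, ?_⟩
  rw [← Subgroup.zpowers_pow_of_coprime (hk.coprime_dvd_right hord), (hxz.pow_left c).mul_pow,
    ← pow_mul, pow_eq_pow_iff_modEq.mpr (hx ▸ (hkkx.mul_left c).trans hckx),
    pow_eq_pow_iff_modEq.mpr hk1, pow_one]

end

theorem stmt_7_general (p q r s t : ℕ) (hp : p.Prime) (hq : q.Prime) (hpq : p ≠ q)
    (G : Type*) [Group G] (x y : G)
    (α : (ZMod (p ^ r))ˣ) (hα : orderOf α = q ^ t)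
    (hx : orderOf x = p ^ r) (hy : orderOf y = q ^ s)
    (hcomm : y * x * y⁻¹ = x ^ ((α : ZMod (p ^ r)).val))
    (hgen : Subgroup.closure {x, y} = ⊤)
    (hcard : Nat.card G = p ^ r * q ^ s) :
    ∀ H : Subgroup G, (∃ g : G, H = Subgroup.zpowers g) →
      (∃ a j : ℕ, a < p ^ r ∧ j < t ∧ H = Subgroup.zpowers (x ^ a * y ^ q ^ j)) ∨
      (∃ i j : ℕ, i ≤ r ∧ t ≤ j ∧ j ≤ s ∧
        H = Subgroup.zpowers (x ^ p ^ i * y ^ q ^ j)) := by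
  have : NeZero (p ^ r) := ⟨pow_ne_zero r hp.ne_zero⟩
  have : Finite G := Nat.finite_of_card_ne_zero
    (hcard ▸ mul_ne_zero (NeZero.ne _) (pow_ne_zero s hq.ne_zero))
  have hcop : (p ^ r).Coprime (q ^ s) := Nat.Coprime.pow r s ((Nat.coprime_primes hp hq).mpr hpq)
  have : (Subgroup.zpowers x).Normal :=
    zpowers_normal_of_conj_eq_pow hcomm (by rw [hx]; exact ZMod.val_coe_unit_coprime α) hgen
  have hsup : Subgroup.zpowers x ⊔ Subgroup.zpowers y = ⊤ := by
    rw [← hgen, Set.insert_eq, Subgroup.closure_union, Subgroup.zpowers_eq_closure,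
      Subgroup.zpowers_eq_closure]
  rintro H ⟨g, rfl⟩
  obtain ⟨n, hn, b, rfl⟩ := exists_mem_mul_pow_of_sup_zpowers_eq_top hsup g
  obtain ⟨_, hn', j, hjs, hg⟩ :=
    exists_zpowers_mul_pow_eq_zpowers_mul_pow_prime_pow hq hn hy hcard hcop b
  obtain ⟨c, hc, rfl⟩ := exists_pow_lt_orderOf_eq_of_mem_zpowers hn'
  rcases lt_or_ge j t with hjt | htj
  · exact Or.inl ⟨c, j, hx ▸ hc, hjt, hg⟩
  have hxy : Commute x (y ^ q ^ j) := commute_pow_of_conj_eq_pow hcomm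
    (by rw [hx]; exact ZMod.val_pow_modEq_one_of_orderOf_dvd (hα ▸ pow_dvd_pow q htj))
  obtain ⟨i, hir, hc'⟩ := exists_zpowers_pow_mul_eq_zpowers_pow_prime_pow_mul hp hx hxy
    (hcop.coprime_dvd_right (hy ▸ orderOf_pow_dvd _)) c
  exact Or.inr ⟨i, j, hir, htj, hjs, hg.trans hc'⟩

theorem stmt_7 (p q r s t : ℕ) (hp : p.Prime) (hq : q.Prime) (hpq : p ≠ q)
    (hpodd : Odd p) (hqodd : Odd q)
    (hr : 0 < r) (hs : 0 < s) (ht : 1 ≤ t) (hts : t ≤ s)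
    (G : Type*) [Group G] (x y : G)
    (α : (ZMod (p ^ r))ˣ) (hα : orderOf α = q ^ t)
    (hx : orderOf x = p ^ r) (hy : orderOf y = q ^ s)
    (hcomm : y * x * y⁻¹ = x ^ ((α : ZMod (p ^ r)).val))
    (hgen : Subgroup.closure {x, y} = ⊤)
    (hcard : Nat.card G = p ^ r * q ^ s) :
    ∀ H : Subgroup G, (∃ g : G, H = Subgroup.zpowers g) →
      (∃ a j : ℕ, a < p ^ r ∧ j < t ∧ H = Subgroup.zpowers (x ^ a * y ^ q ^ j)) ∨
      (∃ i j : ℕ, i ≤ r ∧ t ≤ j ∧ j ≤ s ∧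
        H = Subgroup.zpowers (x ^ p ^ i * y ^ q ^ j)) :=
  stmt_7_general p q r s t hp hq hpq G x y α hα hx hy hcomm hgen hcard
end

section
/- Let G = Z_{p^r} ⋊_α Z_{q^s} with ord(α) = q^t. If a ∈ Z_{p^r}, b = v q^j ∈ Z_{q^s} with v ∈ (Z_{q^s})^* and 0 ≤ j < t, then ⟨x^a y^b⟩ = ⟨x^{a'} y^{q^j}⟩, where a' = a(α^{q^j} − 1)/(α^b − 1) in Z_{p^r}. -/
/-!
Write `A = α` in `ZMod (p ^ r)`. From `y x y⁻¹ = x ^ A` one gets `y ^ d x ^ m y ^ (-d) = x ^ (m A ^ d)`,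
hence `(x ^ c y ^ d) ^ w = x ^ (c (1 + A ^ d + ⋯ + A ^ (d (w - 1)))) y ^ (d w)`, and the geometric
sum equals `(A ^ (d w) - 1) / (A ^ d - 1)` as soon as `A ^ d - 1` is a unit. With `b = v q ^ j`,
this gives `(x ^ a' y ^ (q ^ j)) ^ v = x ^ a y ^ b`, and `(x ^ a y ^ b) ^ w = x ^ a' y ^ (q ^ j)` for
`w` inverse to `v` modulo `q ^ s`. The units `A ^ b - 1`, `A ^ (q ^ j) - 1` are invertible because
`A ^ e ≠ 1` has order prime to `p`, whereas the units `≡ 1 (mod p)` form a group of order `p ^ (r - 1)`.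
-/

open Finset Subgroup

theorem ZMod.card_ker_unitsMap_prime_pow {p r : ℕ} (hp : p.Prime) (hr : 0 < r) :
    Nat.card (ZMod.unitsMap (dvd_pow_self p hr.ne')).ker = p ^ (r - 1) := by
  have : NeZero (p ^ r) := ⟨pow_ne_zero r hp.ne_zero⟩
  have := Fact.mk hp
  have hsurj := ZMod.unitsMap_surjective (dvd_pow_self p hr.ne')
  have key := (ZMod.unitsMap (dvd_pow_self p hr.ne')).ker.card_mul_index
  have card_units (n : ℕ) [NeZero n] : Nat.card (ZMod n)ˣ = n.totient := by
    rw [Nat.card_eq_fintype_card, ZMod.card_units_eq_totient]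
  rw [Subgroup.index_ker, MonoidHom.range_eq_top_of_surjective _ hsurj, Subgroup.card_top,
    card_units, card_units, Nat.totient_prime_pow hp hr, Nat.totient_prime hp] at key
  exact Nat.eq_of_mul_eq_mul_right (Nat.sub_pos_of_lt hp.one_lt) key

theorem ZMod.isUnit_coe_sub_one_of_coprime_orderOf {p r : ℕ} (hp : p.Prime) (hr : 0 < r)
    {u : (ZMod (p ^ r))ˣ} (hu : (orderOf u).Coprime p) (hu1 : u ≠ 1) :
    IsUnit ((u : ZMod (p ^ r)) - 1) := by
  have : NeZero (p ^ r) := ⟨pow_ne_zero r hp.ne_zero⟩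
  by_contra hnu
  rw [← ZMod.natCast_zmod_val ((u : ZMod (p ^ r)) - 1),
    ZMod.isUnit_natCast_iff_not_dvd_pow hp hr, not_not] at hnu
  have hdvd := dvd_pow_self p hr.ne'
  have hker : u ∈ (ZMod.unitsMap hdvd).ker := by
    have h0 : ZMod.castHom hdvd (ZMod p) ((u : ZMod (p ^ r)) - 1) = 0 := by
      rw [← ZMod.natCast_zmod_val ((u : ZMod (p ^ r)) - 1), map_natCast,
        ZMod.natCast_eq_zero_iff]
      exact hnu
    rw [map_sub, map_one, sub_eq_zero] at h0
    exact Units.ext h0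
  have hord : orderOf u ∣ p ^ (r - 1) :=
    ZMod.card_ker_unitsMap_prime_pow hp hr ▸ Subgroup.orderOf_dvd_natCard _ hker
  exact hu1 (orderOf_eq_one_iff.mp ((hu.pow_right (r - 1)).eq_one_of_dvd hord))

section SemidirectPower

variable {G : Type*} [Group G] {x y : G} {k : ℕ}

theorem conj_pow_pow_eq_of_conj_eq_pow (h : y * x * y⁻¹ = x ^ k) (d m : ℕ) :
    y ^ d * x ^ m * (y ^ d)⁻¹ = x ^ (m * k ^ d) := by
  induction d with
  | zero => simp
  | succ d ih =>
    calc y ^ (d + 1) * x ^ m * (y ^ (d + 1))⁻¹ = y * (y ^ d * x ^ m * (y ^ d)⁻¹) * y⁻¹ := by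
          group
      _ = (y * x * y⁻¹) ^ (m * k ^ d) := by rw [ih, conj_pow]
      _ = x ^ (m * k ^ (d + 1)) := by rw [h, ← pow_mul]; ring_nf

theorem mul_pow_eq_of_conj_eq_pow (h : y * x * y⁻¹ = x ^ k) (c d w : ℕ) :
    (x ^ c * y ^ d) ^ w = x ^ (c * ∑ i ∈ range w, k ^ (d * i)) * y ^ (d * w) := by
  induction w with
  | zero => simp
  | succ w ih =>
    calc (x ^ c * y ^ d) ^ (w + 1)
        = x ^ (c * ∑ i ∈ range w, k ^ (d * i)) * (y ^ (d * w) * x ^ c * (y ^ (d * w))⁻¹) *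
            (y ^ (d * w) * y ^ d) := by rw [pow_succ, ih]; group
      _ = x ^ (c * ∑ i ∈ range (w + 1), k ^ (d * i)) * y ^ (d * (w + 1)) := by
        rw [conj_pow_pow_eq_of_conj_eq_pow h, ← pow_add, ← pow_add, sum_range_succ]
        ring_nf

variable {n : ℕ}

theorem pow_val_natCast (hx : x ^ n = 1) (m : ℕ) : x ^ (m : ZMod n).val = x ^ m := by
  rw [ZMod.val_natCast, ← pow_eq_pow_mod m hx]

theorem mul_pow_eq_of_conj_eq_pow_val [NeZero n] (hx : x ^ n = 1) {A : ZMod n}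
    (h : y * x * y⁻¹ = x ^ A.val) (c : ZMod n) {d : ℕ} (hA : IsUnit (A ^ d - 1)) (w : ℕ) :
    (x ^ c.val * y ^ d) ^ w = x ^ (c * ((A ^ (d * w) - 1) * (A ^ d - 1)⁻¹)).val * y ^ (d * w) := by
  rw [mul_pow_eq_of_conj_eq_pow h, ← pow_val_natCast hx]
  congr 3
  push_cast
  simp only [ZMod.natCast_val, ZMod.cast_id', id_eq, pow_mul]
  rw [← geom_sum_mul, mul_assoc, ZMod.mul_inv_of_unit _ hA, mul_one]

theorem zpowers_mul_pow_eq_of_conj_eq_pow_val [NeZero n] {m : ℕ} (hx : x ^ n = 1)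
    (hy : y ^ m = 1) {A : ZMod n} (h : y * x * y⁻¹ = x ^ A.val) (hAm : A ^ m = 1)
    (c : ZMod n) {e v w : ℕ} (he : IsUnit (A ^ e - 1)) (hve : IsUnit (A ^ (v * e) - 1))
    (hw : v * e * w ≡ e [MOD m]) :
    zpowers (x ^ c.val * y ^ (v * e)) =
      zpowers (x ^ (c * ((A ^ e - 1) * (A ^ (v * e) - 1)⁻¹)).val * y ^ e) := by
  have hAw : A ^ (v * e * w) = A ^ e := pow_eq_pow_of_modEq hw hAm
  have hyw : y ^ (v * e * w) = y ^ e := pow_eq_pow_of_modEq hw hy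
  apply le_antisymm <;> rw [zpowers_le]
  · convert npow_mem_zpowers _ v using 1
    rw [mul_pow_eq_of_conj_eq_pow_val hx h _ he, mul_comm e v]
    congr 3
    calc c = c * ((A ^ e - 1) * (A ^ e - 1)⁻¹) * ((A ^ (v * e) - 1) * (A ^ (v * e) - 1)⁻¹) := by
          rw [ZMod.mul_inv_of_unit _ he, ZMod.mul_inv_of_unit _ hve, mul_one, mul_one]
      _ = _ := by ring
  · convert npow_mem_zpowers _ w using 1
    rw [mul_pow_eq_of_conj_eq_pow_val hx h _ hve, hAw, hyw]

end SemidirectPower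

theorem pow_mul_prime_pow_ne_one {M : Type*} [Monoid M] {g : M} {q t j u : ℕ} (hq : q.Prime)
    (hg : orderOf g = q ^ t) (hj : j < t) (hu : u.Coprime q) : g ^ (u * q ^ j) ≠ 1 := by
  intro h
  have hdvd : q ^ t ∣ u * q ^ j := hg ▸ orderOf_dvd_of_pow_eq_one h
  have := (Nat.pow_dvd_pow_iff_le_right hq.one_lt).mp
    ((Nat.Coprime.pow_left t hu.symm).dvd_of_dvd_mul_left hdvd)
  omega

theorem stmt_8_general (p q r s t : ℕ) (hp : p.Prime) (hq : q.Prime) (hpq : p ≠ q)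
    (hr : 0 < r) (hts : t ≤ s)
    (G : Type*) [Group G] (x y : G)
    (α : (ZMod (p ^ r))ˣ) (hα : orderOf α = q ^ t)
    (hx : orderOf x = p ^ r) (hy : orderOf y = q ^ s)
    (hcomm : y * x * y⁻¹ = x ^ ((α : ZMod (p ^ r)).val)) :
    ∀ a v j : ℕ, IsUnit (v : ZMod (q ^ s)) → j < t →
      Subgroup.zpowers (x ^ a * y ^ (v * q ^ j)) =
        Subgroup.zpowers
          (x ^ (((a : ZMod (p ^ r)) *
            (((α : ZMod (p ^ r)) ^ q ^ j - 1) * ((α : ZMod (p ^ r)) ^ (v * q ^ j) - 1)⁻¹)).val) * y ^ q ^ j) := by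
  intro a v j hv hj
  have hxp : x ^ p ^ r = 1 := hx ▸ pow_orderOf_eq_one x
  have : NeZero (p ^ r) := ⟨pow_ne_zero r hp.ne_zero⟩
  have : NeZero (q ^ s) := ⟨pow_ne_zero s hq.ne_zero⟩
  have hαq : α ^ q ^ s = 1 := orderOf_dvd_iff_pow_eq_one.mp (hα ▸ pow_dvd_pow q hts)
  have hvq : v.Coprime q :=
    (Nat.coprime_pow_right_iff (by omega) _ _).mp ((ZMod.isUnit_iff_coprime v _).mp hv)
  have hunit (u : ℕ) (hu : u.Coprime q) : IsUnit ((α : ZMod (p ^ r)) ^ (u * q ^ j) - 1) := by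
    rw [← Units.val_pow_eq_pow_val]
    refine ZMod.isUnit_coe_sub_one_of_coprime_orderOf hp hr ?_ (pow_mul_prime_pow_ne_one hq hα hj hu)
    exact (Nat.Coprime.pow_left t ((Nat.coprime_primes hq hp).mpr hpq.symm)).coprime_dvd_left
      (hα ▸ orderOf_pow_dvd _)
  have hw : v * q ^ j * ((v : ZMod (q ^ s))⁻¹).val ≡ q ^ j [MOD q ^ s] := by
    rw [← ZMod.natCast_eq_natCast_iff]
    push_cast
    rw [ZMod.natCast_val, ZMod.cast_id', id_eq, mul_right_comm, ZMod.mul_inv_of_unit _ hv, one_mul]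
  rw [← pow_val_natCast hxp]
  exact zpowers_mul_pow_eq_of_conj_eq_pow_val hxp (hy ▸ pow_orderOf_eq_one y) hcomm (by rw [← Units.val_pow_eq_pow_val, hαq, Units.val_one])
    _ (by simpa using hunit 1 (Nat.coprime_one_left q)) (hunit v hvq) hw

theorem stmt_8 (p q r s t : ℕ) (hp : p.Prime) (hq : q.Prime) (hpq : p ≠ q)
    (hpodd : Odd p) (hqodd : Odd q)
    (hr : 0 < r) (hs : 0 < s) (ht : 1 ≤ t) (hts : t ≤ s)
    (G : Type*) [Group G] (x y : G)
    (α : (ZMod (p ^ r))ˣ) (hα : orderOf α = q ^ t)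
    (hx : orderOf x = p ^ r) (hy : orderOf y = q ^ s)
    (hcomm : y * x * y⁻¹ = x ^ ((α : ZMod (p ^ r)).val))
    (hgen : Subgroup.closure {x, y} = ⊤)
    (hcard : Nat.card G = p ^ r * q ^ s) :
    ∀ a v j : ℕ, IsUnit (v : ZMod (q ^ s)) → j < t →
      Subgroup.zpowers (x ^ a * y ^ (v * q ^ j)) =
        Subgroup.zpowers
          (x ^ (((a : ZMod (p ^ r)) *
            (((α : ZMod (p ^ r)) ^ q ^ j - 1) * ((α : ZMod (p ^ r)) ^ (v * q ^ j) - 1)⁻¹)).val) * y ^ q ^ j) :=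
  stmt_8_general p q r s t hp hq hpq hr hts G x y α hα hx hy hcomm
end

section
/- Let G = Z_{p^r} ⋊_α Z_{q^s} with ord(α) = q^t, 1 ≤ t ≤ s. Every subgroup of G is either of the form ⟨x^{p^i} y^{q^j}⟩ with 0 ≤ i ≤ r and t ≤ j ≤ s, or of the form ⟨x^{p^i}, x^a y^{q^j}⟩ with 0 ≤ i ≤ r, 0 ≤ a < p^r, and 0 ≤ j < t. -/
/-
Since `y` normalises `⟨x⟩`, the quotient `G ⧸ ⟨x⟩` is cyclic, generated by the image of `y`.
A subgroup `H` meets `⟨x⟩` in some `⟨x ^ p ^ i⟩` and maps onto some `⟨ȳ ^ q ^ j⟩`; lifting that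
generator to `x ^ b * y ^ q ^ j ∈ H` gives `H = ⟨x ^ p ^ i, x ^ b * y ^ q ^ j⟩`. When `t ≤ j` we
have `α ^ q ^ j = 1`, so `y ^ q ^ j` commutes with `x`; the two factors then have coprime orders,
so each is a power of their product. Hence `x ^ b ∈ H ∩ ⟨x⟩ = ⟨x ^ p ^ i⟩` can be dropped and
`H = ⟨x ^ p ^ i * y ^ q ^ j⟩`.
-/

open Subgroup

theorem SemiconjBy.pow_left_pow {M : Type*} [Monoid M] {x y : M} {k : ℕ}
    (h : SemiconjBy y x (x ^ k)) : ∀ c : ℕ, SemiconjBy (y ^ c) x (x ^ k ^ c)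
  | 0 => by simp
  | c + 1 => by
    rw [pow_succ, pow_succ, pow_mul]
    exact ((h.pow_left_pow c).pow_right k).mul_left h

section
variable {G : Type*} [Group G]

theorem commute_pow_of_orderOf_dvd {n : ℕ} [NeZero n] {x y : G} (hx : orderOf x = n)
    {α : (ZMod n)ˣ} (hconj : y * x * y⁻¹ = x ^ (α : ZMod n).val) {c : ℕ} (hc : orderOf α ∣ c) :
    Commute x (y ^ c) := by
  have hsemi := SemiconjBy.pow_left_pow (mul_inv_eq_iff_eq_mul.1 hconj) c
  have hfix : x ^ (α : ZMod n).val ^ c = x := by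
    conv_rhs => rw [← pow_one x]
    rw [pow_eq_pow_iff_modEq, hx, ← ZMod.natCast_eq_natCast_iff]
    push_cast [ZMod.natCast_zmod_val]
    rw [← Units.val_pow_eq_pow_val, orderOf_dvd_iff_pow_eq_one.1 hc, Units.val_one]
  rw [hfix] at hsemi
  exact Commute.symm hsemi

theorem Commute.closure_pair_eq_zpowers_mul {a b : G} (h : Commute a b)
    (hab : (orderOf a).Coprime (orderOf b)) : closure {a, b} = zpowers (a * b) := by
  have ha : a ∈ zpowers (a * b) := by
    have hpow : (a * b) ^ orderOf b = a ^ orderOf b := by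
      rw [h.mul_pow, pow_orderOf_eq_one, mul_one]
    exact zpowers_le.2 (hpow ▸ pow_mem (mem_zpowers _) _) (mem_zpowers_pow_iff.2 hab.symm)
  have hb : b ∈ zpowers (a * b) := by
    have hpow : (a * b) ^ orderOf a = b ^ orderOf a := by
      rw [h.mul_pow, pow_orderOf_eq_one, one_mul]
    exact zpowers_le.2 (hpow ▸ pow_mem (mem_zpowers _) _) (mem_zpowers_pow_iff.2 hab)
  refine le_antisymm ((closure_le _).2 (Set.insert_subset ha (Set.singleton_subset_iff.2 hb))) ?_
  exact zpowers_le.2 (mul_mem (subset_closure (.inl rfl)) (subset_closure (.inr rfl)))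

theorem Subgroup.exists_dvd_eq_zpowers_pow {g : G} {n : ℕ} (hg : g ^ n = 1) {K : Subgroup G}
    (hK : K ≤ zpowers g) : ∃ d, d ∣ n ∧ K = zpowers (g ^ d) := by
  -- the exponents `m` with `g ^ m ∈ K` form a subgroup `aℤ` of `ℤ`
  obtain ⟨a, ha⟩ := Int.subgroup_cyclic
    (K.toAddSubgroup.comap (zmultiplesHom (Additive G) (Additive.ofMul g)))
  have hmem : ∀ m : ℤ, g ^ m ∈ K ↔ a ∣ m := fun m => by
    rw [← Int.mem_zmultiples_iff, AddSubgroup.zmultiples_eq_closure, ← ha]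
    simp
  have hn : a ∣ n := (hmem n).1 (by rw [zpow_natCast, hg]; exact one_mem K)
  refine ⟨a.natAbs, Int.natCast_dvd_natCast.1 (Int.natAbs_dvd.2 hn),
    le_antisymm (fun k hk => ?_) ?_⟩
  · obtain ⟨m, rfl⟩ := mem_zpowers_iff.1 (hK hk)
    obtain ⟨l, rfl⟩ := Int.natAbs_dvd.2 ((hmem m).1 hk)
    rw [zpow_mul, zpow_natCast]
    exact zpow_mem (mem_zpowers _) l
  · rw [zpowers_le, ← zpow_natCast]
    exact (hmem _).2 (Int.natAbs_dvd.1 dvd_rfl)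

theorem Subgroup.eq_inf_sup_zpowers_of_map_eq {N H : Subgroup G} [N.Normal] {g : G} (hg : g ∈ H)
    (hmap : H.map (QuotientGroup.mk' N) = zpowers (QuotientGroup.mk' N g)) :
    H = H ⊓ N ⊔ zpowers g := by
  refine le_antisymm (fun h hh => ?_) (sup_le inf_le_left (zpowers_le.2 hg))
  obtain ⟨k, hk⟩ := mem_zpowers_iff.1 (hmap ▸ mem_map_of_mem _ hh)
  have hrest : (g ^ k)⁻¹ * h ∈ H ⊓ N :=
    mem_inf.2 ⟨mul_mem (inv_mem (zpow_mem hg k)) hh, QuotientGroup.eq.1 (by simpa using hk)⟩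
  simpa using mul_mem (mem_sup_right (zpow_mem (mem_zpowers g) k)) (mem_sup_left hrest)

theorem Subgroup.zpowers_normal_of_conj_mem {x y : G} (hx : IsOfFinOrder x)
    (hconj : y * x * y⁻¹ ∈ zpowers x) (hgen : closure {x, y} = ⊤) : (zpowers x).Normal := by
  rw [← normalizer_eq_top_iff, eq_top_iff, ← hgen, closure_le]
  rintro g (rfl | rfl)
  · exact le_normalizer (mem_zpowers g)
  · have := (finite_zpowers.2 hx).to_subtype
    refine mem_normalizer_fintype fun n hn => ?_
    obtain ⟨k, rfl⟩ := mem_zpowers_iff.1 hn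
    rw [← conj_zpow]
    exact zpow_mem hconj k

theorem QuotientGroup.zpowers_mk'_eq_top {N : Subgroup G} [N.Normal] {x y : G} (hx : x ∈ N)
    (hgen : closure {x, y} = ⊤) : zpowers (mk' N y) = ⊤ := by
  rw [← map_top_of_surjective _ (mk'_surjective N), ← hgen, MonoidHom.map_closure, Set.image_pair,
    mk'_apply N x, (eq_one_iff x).2 hx, closure_insert_one, zpowers_eq_closure]

theorem exists_eq_closure_pow_pow_mul_pow {p q r s : ℕ} (hp : p.Prime) (hq : q.Prime) {x y : G}
    (hx : orderOf x = p ^ r) (hy : y ^ q ^ s = 1) [(zpowers x).Normal]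
    (hQ : zpowers (QuotientGroup.mk' (zpowers x) y) = ⊤) (H : Subgroup G) :
    ∃ i ≤ r, ∃ j ≤ s, ∃ b < p ^ r, H ⊓ zpowers x = zpowers (x ^ p ^ i) ∧
      x ^ b * y ^ q ^ j ∈ H ∧ H = closure {x ^ p ^ i, x ^ b * y ^ q ^ j} := by
  classical
  let mk := QuotientGroup.mk' (zpowers x)
  obtain ⟨dx, hdx, hHx⟩ := (H ⊓ zpowers x).exists_dvd_eq_zpowers_pow
    (hx ▸ pow_orderOf_eq_one x) inf_le_right
  obtain ⟨i, hi, rfl⟩ := (Nat.dvd_prime_pow hp).1 hdx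
  obtain ⟨dy, hdy, hHy⟩ := (H.map mk).exists_dvd_eq_zpowers_pow (g := mk y)
    (by rw [← map_pow, hy, map_one]) (by rw [hQ]; exact le_top)
  obtain ⟨j, hj, rfl⟩ := (Nat.dvd_prime_pow hq).1 hdy
  obtain ⟨g, hgH, hg⟩ : mk (y ^ q ^ j) ∈ H.map mk := by
    rw [hHy, map_pow]; exact mem_zpowers _
  have hfin : IsOfFinOrder x := orderOf_pos_iff.1 (hx ▸ pow_pos hp.pos r)
  obtain ⟨b, hb, hxb⟩ := Finset.mem_image.1 <| hfin.mem_zpowers_iff_mem_range_orderOf.1 <|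
    QuotientGroup.eq_iff_div_mem.1 hg
  obtain rfl : g = x ^ b * y ^ q ^ j := by rw [hxb, div_mul_cancel]
  refine ⟨i, hi, j, hj, b, hx ▸ Finset.mem_range.1 hb, hHx, hgH, ?_⟩
  have hmap : H.map mk = zpowers (mk (x ^ b * y ^ q ^ j)) := by rw [hg, hHy, map_pow]
  calc H = H ⊓ zpowers x ⊔ zpowers (x ^ b * y ^ q ^ j) :=
        H.eq_inf_sup_zpowers_of_map_eq (N := zpowers x) hgH hmap
    _ = closure {x ^ p ^ i, x ^ b * y ^ q ^ j} := by
        rw [hHx, zpowers_eq_closure, zpowers_eq_closure, ← Subgroup.closure_union,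
          Set.singleton_union]

theorem eq_zpowers_mul_of_commute {x w : G} (hxw : Commute x w)
    (hco : (orderOf x).Coprime (orderOf w)) {H : Subgroup G} {m b : ℕ}
    (hHx : H ⊓ zpowers x = zpowers (x ^ m)) (hmem : x ^ b * w ∈ H)
    (hH : H = closure {x ^ m, x ^ b * w}) : H = zpowers (x ^ m * w) := by
  have hsplit := (hxw.pow_left b).closure_pair_eq_zpowers_mul
    (hco.coprime_dvd_left (orderOf_pow_dvd b))
  have hsub : ({x ^ b, w} : Set G) ⊆ H := (closure_le H).1 (hsplit ▸ zpowers_le.2 hmem)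
  have hxb : x ^ b ∈ zpowers (x ^ m) :=
    hHx ▸ mem_inf.2 ⟨hsub (.inl rfl), pow_mem (mem_zpowers x) b⟩
  rw [← (hxw.pow_left m).closure_pair_eq_zpowers_mul (hco.coprime_dvd_left (orderOf_pow_dvd m))]
  apply le_antisymm
  · rw [hH, closure_le]
    refine Set.insert_subset (subset_closure (.inl rfl)) (Set.singleton_subset_iff.2 ?_)
    exact mul_mem (zpowers_le.2 (subset_closure (.inl rfl)) hxb) (subset_closure (.inr rfl))
  · rw [closure_le]
    exact Set.insert_subset (hH ▸ subset_closure (.inl rfl))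
      (Set.singleton_subset_iff.2 (hsub (.inr rfl)))

end

theorem stmt_10_general (p q r s t : ℕ) (hp : p.Prime) (hq : q.Prime) (hpq : p ≠ q)
    (G : Type*) [Group G] (x y : G)
    (α : (ZMod (p ^ r))ˣ) (hα : orderOf α = q ^ t)
    (hx : orderOf x = p ^ r) (hy : orderOf y = q ^ s)
    (hcomm : y * x * y⁻¹ = x ^ ((α : ZMod (p ^ r)).val))
    (hgen : Subgroup.closure {x, y} = ⊤) :
    ∀ H : Subgroup G,
      (∃ i j : ℕ, i ≤ r ∧ t ≤ j ∧ j ≤ s ∧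
        H = Subgroup.zpowers (x ^ p ^ i * y ^ q ^ j)) ∨
      (∃ i a j : ℕ, i ≤ r ∧ a < p ^ r ∧ j < t ∧
        H = Subgroup.closure {x ^ p ^ i, x ^ a * y ^ q ^ j}) := by
  intro H
  have : NeZero (p ^ r) := ⟨pow_ne_zero r hp.ne_zero⟩
  have : (zpowers x).Normal := zpowers_normal_of_conj_mem
    (orderOf_pos_iff.1 (hx ▸ pow_pos hp.pos r)) (hcomm ▸ pow_mem (mem_zpowers x) _) hgen
  obtain ⟨i, hi, j, hj, b, hb, hHx, hmem, hH⟩ := exists_eq_closure_pow_pow_mul_pow hp hq hx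
    (hy ▸ pow_orderOf_eq_one y) (QuotientGroup.zpowers_mk'_eq_top (mem_zpowers x) hgen) H
  rcases lt_or_ge j t with hjt | htj
  · exact .inr ⟨i, b, j, hi, hb, hjt, hH⟩
  · have hcop : (orderOf x).Coprime (orderOf (y ^ q ^ j)) := by
      rw [hx]
      exact (Nat.coprime_pow_primes r s hp hq hpq).coprime_dvd_right (hy ▸ orderOf_pow_dvd _)
    have hxw := commute_pow_of_orderOf_dvd hx hcomm (hα ▸ pow_dvd_pow q htj)
    exact .inl ⟨i, j, hi, htj, hj, eq_zpowers_mul_of_commute hxw hcop hHx hmem hH⟩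

theorem stmt_10 (p q r s t : ℕ) (hp : p.Prime) (hq : q.Prime) (hpq : p ≠ q)
    (hpodd : Odd p) (hqodd : Odd q)
    (hr : 0 < r) (hs : 0 < s) (ht : 1 ≤ t) (hts : t ≤ s)
    (G : Type*) [Group G] (x y : G)
    (α : (ZMod (p ^ r))ˣ) (hα : orderOf α = q ^ t)
    (hx : orderOf x = p ^ r) (hy : orderOf y = q ^ s)
    (hcomm : y * x * y⁻¹ = x ^ ((α : ZMod (p ^ r)).val))
    (hgen : Subgroup.closure {x, y} = ⊤)
    (hcard : Nat.card G = p ^ r * q ^ s) :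
    ∀ H : Subgroup G,
      (∃ i j : ℕ, i ≤ r ∧ t ≤ j ∧ j ≤ s ∧
        H = Subgroup.zpowers (x ^ p ^ i * y ^ q ^ j)) ∨
      (∃ i a j : ℕ, i ≤ r ∧ a < p ^ r ∧ j < t ∧
        H = Subgroup.closure {x ^ p ^ i, x ^ a * y ^ q ^ j}) :=
  stmt_10_general p q r s t hp hq hpq G x y α hα hx hy hcomm hgen
end

section
/- Let α ∈ (Z_{p^r})^* have order q^t (p, q distinct primes, t ≥ 1) and fix 0 ≤ j < t. Define S(n) = (α^{n q^j} − 1)/(α^{q^j} − 1) in Z_{p^r}. Then S is injective on {0, 1, …, q^{t-j} − 1}. -/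
/-!
Put `β = α ^ q ^ j`, a unit of order `q ^ (t - j)`, so that `S n = (β ^ n - 1) * (β - 1)⁻¹`.
The point is that `β - 1` is a unit of `ZMod (p ^ r)`: otherwise `p ∣ β - 1`, and then
`β ^ p ^ r = 1`, which is impossible for `β ≠ 1` of order prime to `p`. Hence multiplying by
`(β - 1)⁻¹` is injective, and `n ↦ β ^ n` is injective below the order of `β`.
-/

lemma pow_prime_pow_eq_one_of_dvd_sub_one {R : Type*} [CommRing R] {p r : ℕ} {x : R}
    (hx : (p : R) ∣ x - 1) (hpr : (p : R) ^ r = 0) : x ^ p ^ r = 1 := by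
  have h := dvd_sub_pow_of_dvd_sub hx r
  rwa [pow_succ, hpr, zero_mul, zero_dvd_iff, one_pow, sub_eq_zero] at h

namespace ZMod

lemma natCast_dvd_of_not_isUnit {p r : ℕ} (hp : p.Prime) {x : ZMod (p ^ r)} (hx : ¬IsUnit x) :
    (p : ZMod (p ^ r)) ∣ x := by
  have : NeZero (p ^ r) := ⟨pow_ne_zero r hp.ne_zero⟩
  rw [← natCast_zmod_val x, isUnit_iff_coprime] at hx
  have hdvd : p ∣ x.val := by
    by_contra h
    exact hx ((hp.coprime_iff_not_dvd.2 h).pow_left r).symm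
  rw [← natCast_zmod_val x]
  exact Nat.cast_dvd_cast hdvd

lemma isUnit_sub_one_of_coprime_orderOf {p r : ℕ} (hp : p.Prime) {u : (ZMod (p ^ r))ˣ}
    (hu : u ≠ 1) (hcop : (orderOf u).Coprime p) : IsUnit ((u : ZMod (p ^ r)) - 1) := by
  by_contra h
  have hpow : u ^ p ^ r = 1 := Units.ext <| by
    push_cast
    exact pow_prime_pow_eq_one_of_dvd_sub_one (natCast_dvd_of_not_isUnit hp h)
      (by rw [← Nat.cast_pow, natCast_self])
  exact hu <| orderOf_eq_one_iff.1 <|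
    Nat.Coprime.eq_one_of_dvd (hcop.pow_right r) (orderOf_dvd_of_pow_eq_one hpow)

lemma injOn_pow_sub_one_mul_inv {n : ℕ} {u : (ZMod n)ˣ} (hu : IsUnit ((u : ZMod n) - 1)) :
    Set.InjOn (fun k : ℕ => ((u : ZMod n) ^ k - 1) * ((u : ZMod n) - 1)⁻¹)
      (Set.Iio (orderOf u)) := by
  intro a ha b hb hab
  have hinv : IsUnit ((u : ZMod n) - 1)⁻¹ := .of_mul_eq_one _ (inv_mul_of_unit _ hu)
  have h : (u : ZMod n) ^ a = (u : ZMod n) ^ b := by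
    simpa using hinv.mul_left_injective hab
  exact pow_injOn_Iio_orderOf ha hb (Units.ext (by simpa using h))

end ZMod

theorem stmt_15_general (p q r t j : ℕ) (hp : p.Prime) (hq : q.Prime) (hpq : p ≠ q)
    (hj : j < t)
    (α : (ZMod (p ^ r))ˣ) (hα : orderOf α = q ^ t) :
    Set.InjOn (fun n : ℕ => ((α : ZMod (p ^ r)) ^ (n * q ^ j) - 1) * ((α : ZMod (p ^ r)) ^ q ^ j - 1)⁻¹)
      (Set.Iio (q ^ (t - j))) := by
  set β := α ^ q ^ j
  have hβ : orderOf β = q ^ (t - j) := by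
    rw [orderOf_pow_of_dvd (pow_ne_zero j hq.ne_zero) (hα ▸ pow_dvd_pow q hj.le), hα,
      Nat.pow_div hj.le hq.pos]
  have hβ_ne_one : β ≠ 1 := by
    rw [Ne, ← orderOf_eq_one_iff, hβ]
    exact (Nat.one_lt_pow (Nat.sub_ne_zero_of_lt hj) hq.one_lt).ne'
  have hcop : (orderOf β).Coprime p :=
    hβ ▸ ((Nat.coprime_primes hq hp).2 hpq.symm).pow_left _
  have hinj := ZMod.injOn_pow_sub_one_mul_inv
    (ZMod.isUnit_sub_one_of_coprime_orderOf hp hβ_ne_one hcop)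
  rw [hβ] at hinj
  convert hinj using 3 with n
  · push_cast [β]
    rw [← pow_mul, mul_comm]
  · simp [β]

theorem stmt_15 (p q r t j : ℕ) (hp : p.Prime) (hq : q.Prime) (hpq : p ≠ q)
    (hr : 0 < r) (ht : 1 ≤ t) (hj : j < t)
    (α : (ZMod (p ^ r))ˣ) (hα : orderOf α = q ^ t) :
    Set.InjOn (fun n : ℕ => ((α : ZMod (p ^ r)) ^ (n * q ^ j) - 1) * ((α : ZMod (p ^ r)) ^ q ^ j - 1)⁻¹)
      (Set.Iio (q ^ (t - j))) :=
  stmt_15_general p q r t j hp hq hpq hj α hα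
end
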